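/- arXiv:2309.07734 — 5 statements merged into one kernel-verified Lean document; each statement's English description precedes it below -/
import Mathlib

section
/- Let k, n ≥ 1 be positive integers and let a, b be real numbers with a + b ≠ 0. Then ∑_{m=0}^{2n} C(2n, m) a^m b^{2n-m} (m - n)^{2k} = (a + b)^{2n} [((a - b)/(a + b))^{2k} n^{2k} + p(n)], where p is a polynomial in n of degree at most 2k - 1 whose coefficients depend only on a, b and k (not on n). -/
/-!
Put `t = a / (a + b)`, so that `1 - t = b / (a + b)`: the sum is `(a + b)^(2n)` times the
expectation of `(M - n)^(2k)` for `M` binomially distributed with parameters `2n` and `t`.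
Expanding `X^i` in falling factorials with Stirling numbers of the second kind and using
`𝔼[(M)_j] = (N)_j t^j` shows that `𝔼[M^i]` is a polynomial in `N` of degree `≤ i` with
coefficient `t^i` in degree `i`. Expanding `(M - n)^(2k)` binomially then gives a polynomial in
`n` of degree `≤ 2k` whose coefficient in degree `2k` is
`∑ C(2k, i) (2t)^i (-1)^(2k-i) = (2t - 1)^(2k) = ((a - b) / (a + b))^(2k)`.
-/

open Polynomial Finset

namespace Nat

theorem choose_add_mul_descFactorial (N j s : ℕ) :
    N.choose (j + s) * (j + s).descFactorial j = N.descFactorial j * (N - j).choose s := by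
  have hchoose := Nat.choose_mul (n := N) (Nat.le_add_right j s)
  rw [Nat.add_sub_cancel_left] at hchoose
  rw [descFactorial_eq_factorial_mul_choose, descFactorial_eq_factorial_mul_choose]
  calc N.choose (j + s) * (j ! * (j + s).choose j)
      = j ! * (N.choose (j + s) * (j + s).choose j) := by ring
    _ = j ! * N.choose j * (N - j).choose s := by rw [hchoose]; ring

end Nat

namespace Polynomial

variable {R : Type*} [CommRing R]

theorem X_mul_descPochhammer (j : ℕ) :
    X * descPochhammer R j = descPochhammer R (j + 1) + j • descPochhammer R j := by
  rw [descPochhammer_succ_right, nsmul_eq_mul]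
  ring

theorem X_pow_eq_sum_stirlingSecond_nsmul_descPochhammer (i : ℕ) :
    (X : R[X]) ^ i = ∑ j ∈ range (i + 1), i.stirlingSecond j • descPochhammer R j := by
  induction i with
  | zero => simp
  | succ i ih =>
    have hshift : ∑ j ∈ range (i + 1), (i.stirlingSecond j * j) • descPochhammer R j
        = ∑ j ∈ range (i + 1),
            (i.stirlingSecond (j + 1) * (j + 1)) • descPochhammer R (j + 1) := by
      have h := (sum_range_succ' (fun j => (i.stirlingSecond j * j) • descPochhammer R j)
        (i + 1)).symm.trans (sum_range_succ _ (i + 1))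
      simpa [Nat.stirlingSecond_eq_zero_of_lt (Nat.lt_succ_self i)] using h.symm
    calc (X : R[X]) ^ (i + 1)
        = ∑ j ∈ range (i + 1),
            i.stirlingSecond j • (descPochhammer R (j + 1) + j • descPochhammer R j) := by
          simp only [pow_succ', ih, mul_sum, mul_smul_comm, X_mul_descPochhammer]
      _ = ∑ j ∈ range (i + 1), i.stirlingSecond j • descPochhammer R (j + 1)
            + ∑ j ∈ range (i + 1), (i.stirlingSecond j * j) • descPochhammer R j := by
          simp only [smul_add, sum_add_distrib, mul_smul]
      _ = ∑ j ∈ range (i + 1), (i + 1).stirlingSecond (j + 1) • descPochhammer R (j + 1) := by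
          rw [hshift, ← sum_add_distrib]
          refine sum_congr rfl fun j _ => ?_
          rw [Nat.stirlingSecond_succ_succ, ← add_smul]
          ring_nf
      _ = ∑ j ∈ range (i + 1 + 1), (i + 1).stirlingSecond j • descPochhammer R j := by
          simp [sum_range_succ' _ (i + 1)]

theorem natDegree_descPochhammer_le (j : ℕ) : (descPochhammer R j).natDegree ≤ j := by
  rw [← descPochhammer_map (algebraMap ℤ R)]
  exact (natDegree_map_le).trans (descPochhammer_natDegree ℤ j).le

theorem coeff_descPochhammer_self (j : ℕ) : (descPochhammer R j).coeff j = 1 := by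
  have h := (monic_descPochhammer ℤ j).coeff_natDegree
  rw [descPochhammer_natDegree] at h
  rw [← descPochhammer_map (algebraMap ℤ R), coeff_map, h, map_one]

theorem sum_choose_mul_pow_mul_pow_mul_descPochhammer_eval (x y : R) (N j : ℕ) :
    ∑ m ∈ range (N + 1),
        (N.choose m : R) * x ^ m * y ^ (N - m) * (descPochhammer R j).eval (m : R)
      = (descPochhammer R j).eval (N : R) * x ^ j * (x + y) ^ (N - j) := by
  simp only [descPochhammer_eval_eq_descFactorial]
  rcases lt_or_ge N j with hNj | hjN
  · rw [Nat.descFactorial_eq_zero_iff_lt.mpr hNj, Nat.cast_zero, zero_mul, zero_mul]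
    refine sum_eq_zero fun m hm => ?_
    rw [Nat.descFactorial_eq_zero_iff_lt.mpr (by grind), Nat.cast_zero, mul_zero]
  obtain ⟨s, rfl⟩ : ∃ s, N = j + s := ⟨N - j, by omega⟩
  have hlow : ∀ m ∈ range j, ((j + s).choose m : R) * x ^ m * y ^ (j + s - m) *
      (m.descFactorial j : R) = 0 := fun m hm => by
    rw [Nat.descFactorial_eq_zero_iff_lt.mpr (mem_range.mp hm), Nat.cast_zero, mul_zero]
  rw [add_assoc, sum_range_add, sum_eq_zero hlow, zero_add, Nat.add_sub_cancel_left, add_pow,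
    mul_sum]
  refine sum_congr rfl fun u hu => ?_
  have hkey : ((j + s).choose (j + u) : R) * ((j + u).descFactorial j : R)
      = ((j + s).descFactorial j : R) * (s.choose u : R) := by
    have h := Nat.choose_add_mul_descFactorial (j + s) j u
    rw [Nat.add_sub_cancel_left] at h
    simpa only [Nat.cast_mul] using congrArg (Nat.cast : ℕ → R) h
  rw [show j + s - (j + u) = s - u by omega, pow_add]
  linear_combination x ^ j * x ^ u * y ^ (s - u) * hkey

theorem degree_sub_C_mul_X_pow_le {p : R[X]} {d : ℕ} (hp : p.natDegree ≤ d) :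
    (p - C (p.coeff d) * X ^ d).degree ≤ ((d - 1 : ℕ) : WithBot ℕ) := by
  refine degree_le_iff_coeff_zero _ _ |>.mpr fun e he => ?_
  have hde : d - 1 < e := by exact_mod_cast he
  rw [coeff_sub, coeff_C_mul_X_pow]
  rcases eq_or_ne e d with rfl | hed
  · rw [if_pos rfl, sub_self]
  · rw [if_neg hed, coeff_eq_zero_of_natDegree_lt (by omega), sub_zero]

end Polynomial

/-- `binomialMean t N f` is `𝔼[f(M)]` for `M` binomially distributed with parameters `N`, `t`. -/
noncomputable def binomialMean {R : Type*} [CommRing R] (t : R) (N : ℕ) : R[X] →ₗ[R] R :=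
  ∑ m ∈ range (N + 1), ((N.choose m : R) * t ^ m * (1 - t) ^ (N - m)) • leval (m : R)

noncomputable def binomialMomentPoly {R : Type*} [CommRing R] (t : R) (i : ℕ) : R[X] :=
  ∑ j ∈ range (i + 1), C ((i.stirlingSecond j : R) * t ^ j) * descPochhammer R j

section binomialMean

variable {R : Type*} [CommRing R]

theorem binomialMean_apply (t : R) (N : ℕ) (f : R[X]) :
    binomialMean t N f
      = ∑ m ∈ range (N + 1), (N.choose m : R) * t ^ m * (1 - t) ^ (N - m) * f.eval (m : R) := by
  simp [binomialMean, LinearMap.sum_apply]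

theorem binomialMean_descPochhammer (t : R) (N j : ℕ) :
    binomialMean t N (descPochhammer R j) = (descPochhammer R j).eval (N : R) * t ^ j := by
  rw [binomialMean_apply, sum_choose_mul_pow_mul_pow_mul_descPochhammer_eval, add_sub_cancel,
    one_pow, mul_one]

theorem binomialMean_X_pow (t : R) (N i : ℕ) :
    binomialMean t N (X ^ i) = (binomialMomentPoly t i).eval (N : R) := by
  rw [X_pow_eq_sum_stirlingSecond_nsmul_descPochhammer, map_sum, binomialMomentPoly,
    eval_finsetSum]
  refine sum_congr rfl fun j _ => ?_
  rw [map_nsmul, binomialMean_descPochhammer, eval_C_mul, nsmul_eq_mul]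
  ring

theorem natDegree_binomialMomentPoly_le (t : R) (i : ℕ) :
    (binomialMomentPoly t i).natDegree ≤ i :=
  natDegree_sum_le_of_forall_le _ _ fun j hj =>
    natDegree_C_mul_le _ _ |>.trans <| (natDegree_descPochhammer_le j).trans <|
      Nat.lt_succ_iff.mp (mem_range.mp hj)

theorem coeff_binomialMomentPoly_self (t : R) (i : ℕ) :
    (binomialMomentPoly t i).coeff i = t ^ i := by
  rw [binomialMomentPoly, finsetSum_coeff, sum_range_succ, sum_eq_zero, zero_add, coeff_C_mul,
    coeff_descPochhammer_self, Nat.stirlingSecond_self, Nat.cast_one, one_mul, mul_one]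
  intro j hj
  rw [coeff_C_mul, coeff_eq_zero_of_natDegree_lt
    ((natDegree_descPochhammer_le j).trans_lt (mem_range.mp hj)), mul_zero]

theorem binomialMean_X_sub_C_pow (t c : R) (N d : ℕ) :
    binomialMean t N ((X - C c) ^ d)
      = ∑ i ∈ range (d + 1),
          (d.choose i : R) * (-c) ^ (d - i) * (binomialMomentPoly t i).eval (N : R) := by
  rw [sub_eq_add_neg, ← C_neg, add_pow, map_sum]
  refine sum_congr rfl fun i _ => ?_
  rw [← C_pow, ← map_natCast C, mul_assoc, ← C_mul, mul_comm, ← smul_eq_C_mul, map_smul,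
    binomialMean_X_pow, smul_eq_mul, mul_comm ((-c) ^ (d - i))]

theorem exists_binomialMean_X_sub_C_pow_eq_eval (t : R) (q d : ℕ) :
    ∃ Q : R[X], Q.natDegree ≤ d ∧ Q.coeff d = (q * t - 1) ^ d ∧
      ∀ n : ℕ, binomialMean t (q * n) ((X - C (n : R)) ^ d) = Q.eval (n : R) := by
  set M : ℕ → R[X] := fun i => (binomialMomentPoly t i).comp (C (q : R) * X)
  have hM_natDegree (i : ℕ) : (M i).natDegree ≤ i :=
    natDegree_le_iff_coeff_eq_zero.mpr fun e he => by
      rw [comp_C_mul_X_coeff, coeff_eq_zero_of_natDegree_lt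
        ((natDegree_binomialMomentPoly_le t i).trans_lt (by exact_mod_cast he)), zero_mul]
  have hM_coeff (i : ℕ) : (M i).coeff i = (q * t) ^ i := by
    rw [comp_C_mul_X_coeff, coeff_binomialMomentPoly_self, mul_pow, mul_comm]
  refine ⟨∑ i ∈ range (d + 1), C ((d.choose i : R) * (-1) ^ (d - i)) * (M i * X ^ (d - i)),
    ?_, ?_, fun n => ?_⟩
  · refine natDegree_sum_le_of_forall_le _ _ fun i hi => (natDegree_C_mul_le _ _).trans ?_
    refine (natDegree_mul_le_of_le (hM_natDegree i) (natDegree_X_pow_le _)).trans_eq ?_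
    have := mem_range.mp hi
    omega
  · rw [finsetSum_coeff, sub_eq_add_neg, add_pow]
    refine sum_congr rfl fun i hi => ?_
    obtain ⟨j, rfl⟩ : ∃ j, d = i + j := ⟨d - i, by have := mem_range.mp hi; omega⟩
    rw [Nat.add_sub_cancel_left, coeff_C_mul, coeff_mul_X_pow, hM_coeff]
    ring
  · rw [binomialMean_X_sub_C_pow, eval_finsetSum]
    refine sum_congr rfl fun i _ => ?_
    simp only [M, eval_mul, eval_C, eval_pow, eval_X, eval_comp, Nat.cast_mul]
    ring

end binomialMean

theorem sum_choose_mul_pow_mul_pow_mul_eval_eq_binomialMean {K : Type*} [Field K] {a b : K}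
    (hab : a + b ≠ 0) (N : ℕ) (f : K[X]) :
    ∑ m ∈ range (N + 1), (N.choose m : K) * a ^ m * b ^ (N - m) * f.eval (m : K)
      = (a + b) ^ N * binomialMean (a / (a + b)) N f := by
  have hcompl : 1 - a / (a + b) = b / (a + b) := by field_simp; ring
  rw [binomialMean_apply, mul_sum, hcompl]
  refine sum_congr rfl fun m hm => ?_
  have hsplit : (a + b) ^ N = (a + b) ^ m * (a + b) ^ (N - m) := by
    rw [← pow_add, Nat.add_sub_cancel' (Nat.lt_succ_iff.mp (mem_range.mp hm))]
  rw [hsplit, div_pow, div_pow]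
  field_simp

theorem binomial_sum_moment_asymptotic_general (k : ℕ) (a b : ℝ) (hab : a + b ≠ 0) :
    ∃ p : Polynomial ℝ, p.degree ≤ (2 * k - 1 : ℕ) ∧
      ∀ n : ℕ, 1 ≤ n →
        ∑ m ∈ Finset.range (2 * n + 1),
            (Nat.choose (2 * n) m : ℝ) * a ^ m * b ^ (2 * n - m) * ((m : ℝ) - (n : ℝ)) ^ (2 * k)
          = (a + b) ^ (2 * n) *
              (((a - b) / (a + b)) ^ (2 * k) * (n : ℝ) ^ (2 * k) + p.eval (n : ℝ)) := by
  obtain ⟨Q, hQ_natDegree, hQ_coeff, hQ_eval⟩ :=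
    exists_binomialMean_X_sub_C_pow_eq_eval (a / (a + b)) 2 (2 * k)
  have hlead : ((2 : ℕ) : ℝ) * (a / (a + b)) - 1 = (a - b) / (a + b) := by field_simp; ring
  rw [hlead] at hQ_coeff
  refine ⟨Q - C (Q.coeff (2 * k)) * X ^ (2 * k), degree_sub_C_mul_X_pow_le hQ_natDegree,
    fun n _ => ?_⟩
  have hsum :=
    sum_choose_mul_pow_mul_pow_mul_eval_eq_binomialMean hab (2 * n) ((X - C (n : ℝ)) ^ (2 * k))
  simp only [eval_pow, eval_sub, eval_X, eval_C] at hsum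
  rw [hsum, hQ_eval, hQ_coeff, eval_sub, eval_mul, eval_C, eval_pow, eval_X, add_sub_cancel]

theorem binomial_sum_moment_asymptotic (k : ℕ) (hk : 1 ≤ k) (a b : ℝ) (hab : a + b ≠ 0) :
    ∃ p : Polynomial ℝ, p.degree ≤ (2 * k - 1 : ℕ) ∧
      ∀ n : ℕ, 1 ≤ n →
        ∑ m ∈ Finset.range (2 * n + 1),
            (Nat.choose (2 * n) m : ℝ) * a ^ m * b ^ (2 * n - m) * ((m : ℝ) - (n : ℝ)) ^ (2 * k)
          = (a + b) ^ (2 * n) *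
              (((a - b) / (a + b)) ^ (2 * k) * (n : ℝ) ^ (2 * k) + p.eval (n : ℝ)) :=
  binomial_sum_moment_asymptotic_general k a b hab
end

section
/- For every integer k ≥ 1 and every real x, ∑_{n=0}^{∞} n^{2k} x^n / (2n)! = (x/2) · ₂ₖ₋₁F₂ₖ(2, …, 2; 1, …, 1, 3/2; x/4), where the generalized hypergeometric function has 2k−1 upper parameters equal to 2 and 2k lower parameters consisting of 2k−1 copies of 1 and one copy of 3/2. -/
/-!
The Pochhammer symbols evaluate to factorials: `(2)_j = (j + 1)!`, `(1)_j = j!` and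
`4 ^ j j! (3/2)_j = (2j + 1)!`. With these, `x / 2` times the `j`-th hypergeometric term is
exactly the `(j + 1)`-st term `(j + 1) ^ (2k) x ^ (j + 1) / (2j + 2)!` of the left-hand series,
and the `n = 0` term of that series vanishes because `2k ≥ 1`; so the two sums agree term by term
after a shift of index, with no convergence argument needed.
-/

open Nat

theorem tsum_eq_tsum_succ_of_eq_zero {M : Type*} [AddCommMonoid M] [TopologicalSpace M]
    {f : ℕ → M} (hf : f 0 = 0) : ∑' n, f n = ∑' n, f (n + 1) :=
  (tsum_pnat_eq_tsum_of_eq_zero hf).symm.trans tsum_pnat_eq_tsum_succ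

theorem ascPochhammer_eval_two (S : Type*) [Semiring S] (j : ℕ) :
    (ascPochhammer S j).eval (2 : S) = ((j + 1)! : S) := by
  simpa [one_add_one_eq_two, add_comm] using factorial_mul_ascPochhammer S 1 j

theorem ascPochhammer_eval_three_halves (K : Type*) [Field K] [CharZero K] (j : ℕ) :
    (ascPochhammer K j).eval (3 / 2 : K) = ((2 * j + 1)! : K) / (4 ^ j * j !) := by
  rw [eq_div_iff (mul_ne_zero (pow_ne_zero _ (by norm_num)) (mod_cast factorial_ne_zero j))]
  induction j with
  | zero => simp
  | succ j ih =>
    have h : 2 * (j + 1) + 1 = 2 * j + 1 + 1 + 1 := by ring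
    rw [ascPochhammer_succ_eval, h, factorial_succ, factorial_succ, factorial_succ]
    push_cast
    linear_combination (4 * (3 / 2 + j : K) * (j + 1)) * ih

theorem succ_term_eq_half_mul_hypergeometric_term {K : Type*} [Field K] [CharZero K]
    (m j : ℕ) (x : K) :
    ((j + 1 : ℕ) : K) ^ (m + 1) * x ^ (j + 1) / ((2 * (j + 1))! : K)
      = x / 2 * (((j + 1)! : K) ^ m / ((j ! : K) ^ m * (((2 * j + 1)! : K) / (4 ^ j * j !)))
          * (x / 4) ^ j / j !) := by
  have hj : (j ! : K) ≠ 0 := mod_cast factorial_ne_zero j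
  have h2j : ((2 * j + 1)! : K) ≠ 0 := mod_cast factorial_ne_zero _
  have hj1 : (j + 1 : K) ≠ 0 := Nat.cast_add_one_ne_zero j
  have hfac : ((j + 1)! : K) = (j + 1) * j ! := by push_cast [factorial_succ]; ring
  have hfac2 : ((2 * (j + 1))! : K) = 2 * (j + 1) * (2 * j + 1)! := by
    rw [show 2 * (j + 1) = 2 * j + 1 + 1 by ring, factorial_succ]; push_cast; ring
  rw [hfac, hfac2]
  push_cast
  simp only [mul_pow, div_pow]
  field_simp
  ring

theorem series_eq_hypergeometric (k : ℕ) (hk : 1 ≤ k) (x : ℝ) :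
    ∑' n : ℕ, (n : ℝ) ^ (2 * k) * x ^ n / (Nat.factorial (2 * n) : ℝ)
      = (x / 2) * ∑' j : ℕ,
          ((ascPochhammer ℝ j).eval (2 : ℝ)) ^ (2 * k - 1) /
            (((ascPochhammer ℝ j).eval (1 : ℝ)) ^ (2 * k - 1) *
              ((ascPochhammer ℝ j).eval (3 / 2 : ℝ)))
            * (x / 4) ^ j / (Nat.factorial j : ℝ) := by
  have hexp : 2 * k = 2 * k - 1 + 1 := by omega
  rw [tsum_eq_tsum_succ_of_eq_zero (by rw [hexp]; simp), ← tsum_mul_left]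
  refine tsum_congr fun j => ?_
  rw [ascPochhammer_eval_two, ascPochhammer_eval_one, ascPochhammer_eval_three_halves, hexp,
    succ_term_eq_half_mul_hypergeometric_term, ← hexp]
end

section
/- For every integer k ≥ 1, as x → ∞, ∑_{n=0}^{∞} n^{2k} x^n / (2n)! = (1/2^{2k+1}) x^k e^{√x} (1 + O(x^{-1/2})). That is, there exist constants M, x₀ > 0 such that for all x ≥ x₀, |∑_{n=0}^{∞} n^{2k} x^n/(2n)! − (1/2^{2k+1}) x^k e^{√x}| ≤ M x^{k−1/2} e^{√x}. -/
/-!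
Write `m ^ p = ∑ⱼ S(p, j) m.descFactorial j` with the Stirling numbers of the second kind `S`.
Since `∑ₘ m.descFactorial j tᵐ / m! = tʲ eᵗ`, taking the even-indexed part of this series gives
`∑ₙ (2n) ^ p t²ⁿ / (2n)! = ∑ⱼ S(p, j) (tʲ eᵗ + (-t)ʲ e⁻ᵗ) / 2`. The top term `j = p` has
`S(p, p) = 1` and contributes `t ^ p eᵗ / 2 + O(t ^ p e⁻ᵗ)`, every other term is
`O(t ^ (p - 1) eᵗ)`. With `x = t²`, `p = 2k` and `n ^ 2k = (2n) ^ 2k / 4 ^ k` this is the claim.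
-/

open Finset Real Nat

namespace Nat

theorem mul_descFactorial (m j : ℕ) :
    m * m.descFactorial j = m.descFactorial (j + 1) + j * m.descFactorial j := by
  rcases le_or_gt j m with h | h
  · rw [descFactorial_succ, ← Nat.add_mul, Nat.sub_add_cancel h]
  · rw [descFactorial_eq_zero_iff_lt.2 h, descFactorial_eq_zero_iff_lt.2 (h.trans j.lt_succ_self)]
    simp

theorem pow_eq_sum_stirlingSecond_mul_descFactorial (m p : ℕ) :
    m ^ p = ∑ j ∈ range (p + 1), stirlingSecond p j * m.descFactorial j := by
  induction p with
  | zero => simp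
  | succ p ih =>
    have hshift : ∑ j ∈ range (p + 1), j * stirlingSecond p j * m.descFactorial j
        = ∑ j ∈ range (p + 1), (j + 1) * stirlingSecond p (j + 1) * m.descFactorial (j + 1) := by
      rw [sum_range_succ', sum_range_succ, stirlingSecond_eq_zero_of_lt p.lt_succ_self]
      simp
    rw [sum_range_succ', stirlingSecond_succ_zero, zero_mul, add_zero, pow_succ, ih, sum_mul]
    simp only [stirlingSecond_succ_succ]
    calc ∑ j ∈ range (p + 1), stirlingSecond p j * m.descFactorial j * m
        = ∑ j ∈ range (p + 1), (stirlingSecond p j * m.descFactorial (j + 1)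
            + j * stirlingSecond p j * m.descFactorial j) := by
          refine sum_congr rfl fun j _ => ?_
          rw [mul_assoc, mul_comm _ m, mul_descFactorial]
          ring
      _ = _ := by
          rw [sum_add_distrib, hshift, ← sum_add_distrib]
          refine sum_congr rfl fun j _ => ?_
          ring

end Nat

theorem hasSum_descFactorial_mul_pow_div_factorial (j : ℕ) (t : ℝ) :
    HasSum (fun m : ℕ => (m.descFactorial j : ℝ) * t ^ m / m !) (t ^ j * exp t) := by
  rw [← hasSum_nat_add_iff' j]
  have hlow : ∑ i ∈ range j, (i.descFactorial j : ℝ) * t ^ i / i ! = 0 :=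
    sum_eq_zero fun i hi => by simp [descFactorial_eq_zero_iff_lt.2 (mem_range.1 hi)]
  have hexp : HasSum (fun m : ℕ => t ^ m / m !) (exp t) := by
    rw [exp_eq_exp_ℝ]; exact NormedSpace.expSeries_div_hasSum_exp t
  rw [hlow, sub_zero]
  refine (hexp.mul_left (t ^ j)).congr_fun fun m => ?_
  have hfac : ((m + j) ! : ℝ) = m ! * (m + j).descFactorial j := by
    have h := factorial_mul_descFactorial (Nat.le_add_left j m)
    rw [Nat.add_sub_cancel] at h
    exact_mod_cast h.symm
  rw [hfac, pow_add]
  field_simp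

theorem HasSum.even_indices {𝕜 : Type*} [Field 𝕜] [TopologicalSpace 𝕜] [IsTopologicalRing 𝕜]
    [NeZero (2 : 𝕜)] {f : ℕ → 𝕜} {a b : 𝕜} (ha : HasSum f a)
    (hb : HasSum (fun m => (-1) ^ m * f m) b) :
    HasSum (fun n => f (2 * n)) ((a + b) / 2) := by
  have h := (ha.add hb).div_const 2
  rw [← (mul_right_injective₀ two_ne_zero).hasSum_iff] at h
  · refine h.congr_fun fun n => ?_
    simp [pow_mul]
  · rintro m hm
    obtain ⟨n, rfl⟩ : Odd m := by simpa [← Nat.not_even_iff_odd, even_iff_two_dvd] using hm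
    simp [pow_succ, pow_mul]

theorem hasSum_descFactorial_two_mul_mul_pow_div_factorial (j : ℕ) (t : ℝ) :
    HasSum (fun n : ℕ => ((2 * n).descFactorial j : ℝ) * t ^ (2 * n) / (2 * n)!)
      ((t ^ j * exp t + (-t) ^ j * exp (-t)) / 2) := by
  refine (hasSum_descFactorial_mul_pow_div_factorial j t).even_indices ?_
  refine (hasSum_descFactorial_mul_pow_div_factorial j (-t)).congr_fun fun m => ?_
  rw [neg_pow t m]
  ring

theorem hasSum_two_mul_pow_mul_pow_div_factorial (p : ℕ) (t : ℝ) :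
    HasSum (fun n : ℕ => ((2 * n : ℕ) : ℝ) ^ p * t ^ (2 * n) / (2 * n)!)
      (∑ j ∈ range (p + 1),
        stirlingSecond p j * ((t ^ j * exp t + (-t) ^ j * exp (-t)) / 2)) := by
  refine (hasSum_sum fun j _ => (hasSum_descFactorial_two_mul_mul_pow_div_factorial j t).mul_left
    (stirlingSecond p j : ℝ)).congr_fun fun n => ?_
  rw [← Nat.cast_pow, pow_eq_sum_stirlingSecond_mul_descFactorial, Nat.cast_sum, sum_mul, sum_div]
  refine sum_congr rfl fun j _ => ?_
  push_cast
  ring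

theorem abs_pow_mul_exp_add_neg_pow_mul_exp_neg_le (j : ℕ) {t : ℝ} (ht : 0 ≤ t) :
    |(t ^ j * exp t + (-t) ^ j * exp (-t)) / 2| ≤ t ^ j * exp t := by
  have hneg : exp (-t) ≤ exp t := exp_le_exp.2 (by linarith)
  rw [abs_div, abs_two, div_le_iff₀ two_pos]
  calc |t ^ j * exp t + (-t) ^ j * exp (-t)|
      ≤ t ^ j * exp t + t ^ j * exp (-t) := by
        refine (abs_add_le _ _).trans_eq ?_
        simp only [abs_mul, abs_pow, abs_neg, abs_of_nonneg ht, abs_exp]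
    _ ≤ t ^ j * exp t * 2 := by nlinarith [pow_nonneg ht j]

theorem exp_neg_le_exp_div {t : ℝ} (ht : 0 < t) : exp (-t) ≤ exp t / t := by
  rw [le_div_iff₀ ht, exp_neg]
  calc (exp t)⁻¹ * t ≤ (exp t)⁻¹ * exp t := by gcongr; linarith [add_one_le_exp t]
    _ = 1 := inv_mul_cancel₀ (exp_pos t).ne'
    _ ≤ exp t := one_le_exp ht.le

theorem pow_le_pow_div_of_lt {t : ℝ} (ht : 1 ≤ t) {j p : ℕ} (hjp : j < p) : t ^ j ≤ t ^ p / t := by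
  rw [le_div_iff₀ (by linarith), ← pow_succ]
  exact pow_le_pow_right₀ ht hjp

theorem abs_sum_stirlingSecond_sub_le (p : ℕ) {t : ℝ} (ht : 1 ≤ t) :
    |∑ j ∈ range (p + 1), stirlingSecond p j * ((t ^ j * exp t + (-t) ^ j * exp (-t)) / 2)
        - t ^ p * exp t / 2|
      ≤ (∑ j ∈ range p, (stirlingSecond p j : ℝ) + 1) * t ^ p * exp t / t := by
  have ht0 : 0 < t := by linarith
  rw [sum_range_succ, stirlingSecond_self, Nat.cast_one, one_mul, add_div, add_sub_assoc,
    add_sub_cancel_left]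
  have hrest : ∀ j ∈ range p,
      |(stirlingSecond p j : ℝ) * ((t ^ j * exp t + (-t) ^ j * exp (-t)) / 2)|
        ≤ stirlingSecond p j * (t ^ p * exp t / t) := by
    intro j hj
    rw [abs_mul, Nat.abs_cast]
    gcongr
    calc _ ≤ t ^ j * exp t := abs_pow_mul_exp_add_neg_pow_mul_exp_neg_le j ht0.le
      _ ≤ t ^ p / t * exp t := by gcongr; exact pow_le_pow_div_of_lt ht (mem_range.1 hj)
      _ = _ := by ring
  have htop : |(-t) ^ p * exp (-t) / 2| ≤ t ^ p * exp t / t := by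
    rw [abs_div, abs_mul, abs_pow, abs_neg, abs_of_pos ht0, abs_exp, abs_two]
    calc t ^ p * exp (-t) / 2 ≤ t ^ p * exp (-t) := by
          linarith [mul_nonneg (pow_nonneg ht0.le p) (exp_pos (-t)).le]
      _ ≤ t ^ p * (exp t / t) := by gcongr; exact exp_neg_le_exp_div ht0
      _ = _ := by ring
  calc _ ≤ |∑ j ∈ range p, (stirlingSecond p j : ℝ) * ((t ^ j * exp t + (-t) ^ j * exp (-t)) / 2)|
        + |(-t) ^ p * exp (-t) / 2| := abs_add_le _ _
    _ ≤ ∑ j ∈ range p, stirlingSecond p j * (t ^ p * exp t / t) + t ^ p * exp t / t :=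
        add_le_add ((abs_sum_le_sum_abs _ _).trans (sum_le_sum hrest)) htop
    _ = _ := by rw [← sum_mul]; ring

theorem series_asymptotic_general (k : ℕ) :
    ∃ M x₀ : ℝ, 0 < M ∧ 0 < x₀ ∧ ∀ x : ℝ, x₀ ≤ x →
      |(∑' n : ℕ, (n : ℝ) ^ (2 * k) * x ^ n / (Nat.factorial (2 * n) : ℝ))
          - x ^ k * Real.exp (Real.sqrt x) / 2 ^ (2 * k + 1)|
        ≤ M * x ^ k * Real.exp (Real.sqrt x) / Real.sqrt x := by
  refine ⟨(∑ j ∈ range (2 * k), (stirlingSecond (2 * k) j : ℝ) + 1) / 4 ^ k, 1,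
    by positivity, one_pos, fun x hx => ?_⟩
  obtain ⟨t, ht, rfl⟩ : ∃ t : ℝ, 1 ≤ t ∧ x = t ^ 2 :=
    ⟨√x, one_le_sqrt.2 hx, (sq_sqrt (by linarith)).symm⟩
  have hseries : ∑' n : ℕ, (n : ℝ) ^ (2 * k) * (t ^ 2) ^ n / (2 * n)!
      = (∑' n : ℕ, ((2 * n : ℕ) : ℝ) ^ (2 * k) * t ^ (2 * n) / (2 * n)!) / 4 ^ k := by
    rw [← tsum_div_const]
    refine tsum_congr fun n => ?_
    rw [Nat.cast_mul, Nat.cast_ofNat, mul_pow, pow_mul (2 : ℝ), ← pow_mul t]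
    norm_num
    field_simp
  rw [sqrt_sq (by linarith), hseries,
    (hasSum_two_mul_pow_mul_pow_div_factorial (2 * k) t).tsum_eq, ← pow_mul,
    show (2 : ℝ) ^ (2 * k + 1) = 2 * 4 ^ k by rw [pow_succ, pow_mul]; ring]
  have h4 : (0 : ℝ) < 4 ^ k := by positivity
  rw [← div_div, ← sub_div, abs_div, abs_of_pos h4, div_le_iff₀ h4]
  refine (abs_sum_stirlingSecond_sub_le (2 * k) ht).trans_eq ?_
  field_simp

theorem series_asymptotic (k : ℕ) (hk : 1 ≤ k) :
    ∃ M x₀ : ℝ, 0 < M ∧ 0 < x₀ ∧ ∀ x : ℝ, x₀ ≤ x →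
      |(∑' n : ℕ, (n : ℝ) ^ (2 * k) * x ^ n / (Nat.factorial (2 * n) : ℝ))
          - x ^ k * Real.exp (Real.sqrt x) / 2 ^ (2 * k + 1)|
        ≤ M * x ^ k * Real.exp (Real.sqrt x) / Real.sqrt x :=
  series_asymptotic_general k
end

section
/- Let (X, Y) be bivariate normal with zero means, unit variances and correlation ρ ∈ (−1,1). Then the product Z = XY has probability density f(x) = (1/(π√(1−ρ²))) exp(ρx/(1−ρ²)) K₀(|x|/(1−ρ²)) for x ≠ 0, where K₀ is the modified Bessel function of the second kind of order 0. -/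
/-!
Given `U = u ≠ 0`, the product `u * (ρ * u + √(1 - ρ²) * V)` is normal with mean `ρ u²` and
variance `u² (1 - ρ²)`, so the law of `XY` is the mixture of these normals over `u ~ N(0, 1)` and
has density `z ↦ ∫ φ(u) φ_{ρu², u²(1-ρ²)}(z) du`. Completing the square, the integrand is
`(2π√(1-ρ²))⁻¹ e^{ρz/(1-ρ²)} |u|⁻¹ exp(-(u² + z²/u²) / (2(1-ρ²)))`, and the substitution
`u = √|z| e^{t/2}` turns `du / u` into `dt / 2` and `u² + z²/u²` into `2|z| cosh t`, which
produces `2 K₀(|z| / (1-ρ²))`.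
-/

open MeasureTheory ProbabilityTheory Real

/-- The modified Bessel function of the second kind,
`K_ν(x) = ∫_0^∞ e^{−x cosh t} cosh(νt) dt`. -/
noncomputable def besselK (ν x : ℝ) : ℝ :=
  ∫ t in Set.Ioi (0 : ℝ), Real.exp (-x * Real.cosh t) * Real.cosh (ν * t)

open Set Function
open scoped ENNReal NNReal

lemma lintegral_eq_two_mul_setLIntegral_Ioi_of_even {g : ℝ → ℝ≥0∞} (hg : ∀ x, g (-x) = g x) :
    ∫⁻ x, g x = 2 * ∫⁻ x in Ioi 0, g x := by
  have hIio : ∫⁻ x in Iio 0, g x = ∫⁻ x in Ioi 0, g x := by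
    simpa [hg] using lintegral_image_eq_lintegral_abs_deriv_mul (measurableSet_Ioi (a := 0))
      (fun x _ => (hasDerivAt_neg x).hasDerivWithinAt) neg_injective.injOn g
  rw [← lintegral_add_compl g measurableSet_Iio, compl_Iio, ← setLIntegral_congr Ioi_ae_eq_Ici,
    hIio, two_mul]

lemma setLIntegral_Ioi_inv_mul_comp_sq_add_div_sq {b : ℝ} (hb : 0 < b) (g : ℝ → ℝ≥0∞) :
    ∫⁻ u in Ioi 0, ENNReal.ofReal u⁻¹ * g (u ^ 2 + b ^ 2 / u ^ 2)
      = 2⁻¹ * ∫⁻ t, g (2 * b * cosh t) := by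
  set f : ℝ → ℝ := (√b * ·) ∘ exp ∘ (· / 2) with hf
  have hf_apply : ∀ t, f t = √b * exp (t / 2) := fun _ => rfl
  have hf_pos : ∀ t, 0 < f t := fun t => by rw [hf_apply]; positivity
  have hf_deriv : ∀ t, HasDerivAt f (f t / 2) t := fun t => by
    refine (((hasDerivAt_id t).div_const 2).exp.const_mul √b).congr_deriv ?_
    rw [hf_apply, id]
    ring
  have hf_inj : Injective f := fun s t h => by
    simpa using mul_left_cancel₀ (sqrt_pos.2 hb).ne' h
  have hf_range : range f = Ioi 0 := by
    have hhalf : Surjective (· / (2 : ℝ)) := fun y => ⟨2 * y, by ring⟩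
    rw [hf, range_comp, range_comp, hhalf.range_eq, image_univ, range_exp,
      image_mul_left_Ioi (sqrt_pos.2 hb), mul_zero]
  have hf_sq : ∀ t, f t ^ 2 + b ^ 2 / f t ^ 2 = 2 * b * cosh t := fun t => by
    have : f t ^ 2 = b * exp t := by
      rw [hf_apply, mul_pow, sq_sqrt hb.le, sq, ← exp_add, add_halves]
    rw [this, cosh_eq, exp_neg]
    field_simp
  rw [← hf_range, ← image_univ, lintegral_image_eq_lintegral_abs_deriv_mul MeasurableSet.univ
    (fun t _ => (hf_deriv t).hasDerivWithinAt) hf_inj.injOn, Measure.restrict_univ,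
    ← lintegral_const_mul' _ _ (by simp)]
  refine lintegral_congr fun t => ?_
  have hf_half : f t / 2 * (f t)⁻¹ = 2⁻¹ := by field_simp [(hf_pos t).ne']
  rw [hf_sq, ← mul_assoc, ← ENNReal.ofReal_mul (abs_nonneg _), abs_of_pos (half_pos (hf_pos t)),
    hf_half, ENNReal.ofReal_inv_of_pos two_pos, ENNReal.ofReal_ofNat]

lemma lintegral_inv_abs_mul_comp_sq_add_div_sq {b : ℝ} (hb : 0 < b) (g : ℝ → ℝ≥0∞) :
    ∫⁻ u, ENNReal.ofReal |u|⁻¹ * g (u ^ 2 + b ^ 2 / u ^ 2) = ∫⁻ t, g (2 * b * cosh t) := by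
  rw [lintegral_eq_two_mul_setLIntegral_Ioi_of_even (fun u => by rw [abs_neg, neg_sq]),
    setLIntegral_congr_fun measurableSet_Ioi (fun u hu => by rw [abs_of_pos (mem_Ioi.1 hu)]),
    setLIntegral_Ioi_inv_mul_comp_sq_add_div_sq hb, ← mul_assoc,
    ENNReal.mul_inv_cancel two_ne_zero ENNReal.ofNat_ne_top, one_mul]

lemma integrableOn_exp_neg_mul_cosh {c : ℝ} (hc : 0 < c) :
    IntegrableOn (fun t => exp (-(c * cosh t))) (Ioi 0) := by
  refine (exp_neg_integrableOn_Ioi 0 hc).mono' (by fun_prop) ?_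
  filter_upwards [ae_restrict_mem measurableSet_Ioi] with t ht
  rw [norm_of_nonneg (exp_pos _).le, exp_le_exp, neg_mul, neg_le_neg_iff]
  exact mul_le_mul_of_nonneg_left ((self_le_sinh_iff.2 (le_of_lt ht)).trans (sinh_lt_cosh t).le)
    hc.le

lemma lintegral_exp_neg_mul_cosh {c : ℝ} (hc : 0 < c) :
    ∫⁻ t, ENNReal.ofReal (exp (-(c * cosh t))) = 2 * ENNReal.ofReal (besselK 0 c) := by
  have hK : besselK 0 c = ∫ t in Ioi 0, exp (-(c * cosh t)) := by
    simp only [besselK, zero_mul, cosh_zero, mul_one, neg_mul]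
  rw [lintegral_eq_two_mul_setLIntegral_Ioi_of_even (fun t => by rw [cosh_neg]), hK,
    ofReal_integral_eq_lintegral_ofReal (integrableOn_exp_neg_mul_cosh hc)
      (ae_of_all _ fun t => (exp_pos _).le)]

lemma gaussianReal_map_mul_add (μ : ℝ) (v : ℝ≥0) (a b : ℝ) :
    (gaussianReal μ v).map (fun x => a * x + b)
      = gaussianReal (a * μ + b) (.mk (a ^ 2) (sq_nonneg a) * v) := by
  rw [← gaussianReal_map_add_const, ← gaussianReal_map_const_mul,
    Measure.map_map (measurable_add_const b) (measurable_const_mul a)]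
  rfl

lemma map_prod_eq_withDensity_of_ae_map_eq {α β γ : Type*} [MeasurableSpace α]
    [MeasurableSpace β] [MeasurableSpace γ] {μ : Measure α} {ν : Measure β} {κ : Measure γ}
    [SFinite μ] [SFinite ν] [SFinite κ] {G : α × β → γ} (hG : Measurable G)
    {p : α → γ → ℝ≥0∞} (hp : Measurable (uncurry p))
    (hfiber : ∀ᵐ a ∂μ, ν.map (fun b => G (a, b)) = κ.withDensity (p a)) :
    (μ.prod ν).map G = κ.withDensity (fun c => ∫⁻ a, p a c ∂μ) := by
  ext A hA
  have hfiber_apply : ∀ᵐ a ∂μ, ν (Prod.mk a ⁻¹' (G ⁻¹' A)) = ∫⁻ c in A, p a c ∂κ := by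
    filter_upwards [hfiber] with a ha
    rw [← withDensity_apply _ hA, ← ha, Measure.map_apply (by fun_prop) hA]
    rfl
  rw [Measure.map_apply hG hA, Measure.prod_apply (hG hA), lintegral_congr_ae hfiber_apply,
    withDensity_apply _ hA, lintegral_lintegral_swap hp.aemeasurable]

lemma gaussianReal_map_mul_correlated (ρ u : ℝ) :
    (gaussianReal 0 1).map (fun v => u * (ρ * u + √(1 - ρ ^ 2) * v))
      = gaussianReal (ρ * u ^ 2) (.mk ((u * √(1 - ρ ^ 2)) ^ 2) (sq_nonneg _)) := by
  have haffine : (fun v => u * (ρ * u + √(1 - ρ ^ 2) * v))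
      = fun v => u * √(1 - ρ ^ 2) * v + ρ * u ^ 2 := by
    ext v; ring
  rw [haffine, gaussianReal_map_mul_add, mul_zero, zero_add, mul_one]

lemma map_prod_gaussianReal_mul_correlated {ρ : ℝ} (hρ : ρ ^ 2 < 1) :
    ((gaussianReal 0 1).prod (gaussianReal 0 1)).map
        (fun q : ℝ × ℝ => q.1 * (ρ * q.1 + √(1 - ρ ^ 2) * q.2))
      = volume.withDensity (fun z => ∫⁻ u,
          gaussianPDF (ρ * u ^ 2) (.mk ((u * √(1 - ρ ^ 2)) ^ 2) (sq_nonneg _)) z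
            ∂gaussianReal 0 1) := by
  refine map_prod_eq_withDensity_of_ae_map_eq (by fun_prop) ?_ ?_
  · exact measurable_uncurry_gaussianPDF.comp
      ((by fun_prop : Measurable fun q : ℝ × ℝ => ρ * q.1 ^ 2).prodMk
        (((by fun_prop : Measurable fun q : ℝ × ℝ => (q.1 * √(1 - ρ ^ 2)) ^ 2).subtype_mk).prodMk
          measurable_snd))
  · filter_upwards [(gaussianReal_absolutelyContinuous 0 one_ne_zero).ae_le
      ((countable_singleton 0).ae_notMem volume)] with u hu
    have hσ : 0 < √(1 - ρ ^ 2) := sqrt_pos.2 (by linarith)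
    rw [gaussianReal_map_mul_correlated]
    refine gaussianReal_of_var_ne_zero _ ?_
    rw [Ne, ← NNReal.coe_eq_zero, NNReal.coe_mk]
    exact pow_ne_zero 2 (mul_ne_zero hu hσ.ne')

lemma gaussianPDFReal_mul_gaussianPDFReal_correlated {ρ : ℝ} (hρ : ρ ^ 2 < 1) {u : ℝ}
    (hu : u ≠ 0) (z : ℝ) :
    gaussianPDFReal 0 1 u
        * gaussianPDFReal (ρ * u ^ 2) (.mk ((u * √(1 - ρ ^ 2)) ^ 2) (sq_nonneg _)) z
      = (2 * π * √(1 - ρ ^ 2))⁻¹ * exp (ρ * z / (1 - ρ ^ 2))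
        * (|u|⁻¹ * exp (-((u ^ 2 + z ^ 2 / u ^ 2) / (2 * (1 - ρ ^ 2))))) := by
  have hσ2 : 0 < 1 - ρ ^ 2 := by linarith
  have hσ : 0 < √(1 - ρ ^ 2) := sqrt_pos.2 hσ2
  have hsqrt : √(2 * π * (u * √(1 - ρ ^ 2)) ^ 2) = √(2 * π) * (|u| * √(1 - ρ ^ 2)) := by
    rw [sqrt_mul (by positivity), sqrt_sq_eq_abs, abs_mul, abs_of_pos hσ]
  have h2π : √(2 * π) * √(2 * π) = 2 * π := mul_self_sqrt (by positivity)
  simp only [gaussianPDFReal, NNReal.coe_one, NNReal.coe_mk, mul_one, hsqrt]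
  rw [mul_mul_mul_comm, ← exp_add, mul_mul_mul_comm _ (exp _), ← exp_add]
  congr 1
  · conv_rhs => rw [← h2π]
    simp only [mul_inv]
    ring
  · congr 1
    field_simp
    rw [sq_sqrt hσ2.le]
    ring

lemma lintegral_gaussianPDF_correlated {ρ : ℝ} (hρ : ρ ^ 2 < 1) {z : ℝ} (hz : z ≠ 0) :
    ∫⁻ u, gaussianPDF (ρ * u ^ 2) (.mk ((u * √(1 - ρ ^ 2)) ^ 2) (sq_nonneg _)) z ∂gaussianReal 0 1
      = ENNReal.ofReal (1 / (π * √(1 - ρ ^ 2)) * exp (ρ * z / (1 - ρ ^ 2))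
          * besselK 0 (|z| / (1 - ρ ^ 2))) := by
  have hσ2 : 0 < 1 - ρ ^ 2 := by linarith
  set C := (2 * π * √(1 - ρ ^ 2))⁻¹ * exp (ρ * z / (1 - ρ ^ 2))
  set g : ℝ → ℝ≥0∞ := fun w => ENNReal.ofReal (exp (-(w / (2 * (1 - ρ ^ 2)))))
  have hintegrand : ∀ᵐ u, gaussianPDF 0 1 u
      * gaussianPDF (ρ * u ^ 2) (.mk ((u * √(1 - ρ ^ 2)) ^ 2) (sq_nonneg _)) z
      = ENNReal.ofReal C * (ENNReal.ofReal |u|⁻¹ * g (u ^ 2 + |z| ^ 2 / u ^ 2)) := by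
    filter_upwards [(countable_singleton 0).ae_notMem volume] with u hu
    rw [gaussianPDF_def, gaussianPDF_def, ← ENNReal.ofReal_mul (gaussianPDFReal_nonneg _ _ _),
      gaussianPDFReal_mul_gaussianPDFReal_correlated hρ hu, sq_abs,
      ENNReal.ofReal_mul (show 0 ≤ C by positivity),
      ENNReal.ofReal_mul (inv_nonneg.2 (abs_nonneg u))]
  have hg : ∀ t, g (2 * |z| * cosh t) = ENNReal.ofReal (exp (-(|z| / (1 - ρ ^ 2) * cosh t))) := by
    intro t
    simp only [g]
    congr 3
    field_simp
  rw [gaussianReal_of_var_ne_zero 0 one_ne_zero,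
    lintegral_withDensity_eq_lintegral_mul _ (measurable_gaussianPDF 0 1) (by fun_prop)]
  simp only [Pi.mul_apply]
  rw [lintegral_congr_ae hintegrand, lintegral_const_mul' _ _ ENNReal.ofReal_ne_top,
    lintegral_inv_abs_mul_comp_sq_add_div_sq (abs_pos.2 hz), funext hg,
    lintegral_exp_neg_mul_cosh (div_pos (abs_pos.2 hz) hσ2), ← ENNReal.ofReal_ofNat 2,
    ← ENNReal.ofReal_mul zero_le_two, ← ENNReal.ofReal_mul (by positivity)]
  congr 1
  simp only [C]
  field_simp

theorem product_normal_zero_mean_density_general {Ω : Type*} [MeasureSpace Ω]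
    (U V : Ω → ℝ) (hUV : IndepFun U V ℙ)
    (hU : Measure.map U ℙ = gaussianReal 0 1) (hV : Measure.map V ℙ = gaussianReal 0 1)
    (ρ : ℝ) (hρ : ρ ∈ Set.Ioo (-1 : ℝ) 1) :
    Measure.map (fun ω => U ω * (ρ * U ω + Real.sqrt (1 - ρ ^ 2) * V ω)) ℙ
      = volume.withDensity (fun x => ENNReal.ofReal
          ((1 / (π * Real.sqrt (1 - ρ ^ 2))) * Real.exp (ρ * x / (1 - ρ ^ 2))
            * besselK 0 (|x| / (1 - ρ ^ 2)))) := by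
  have hρ2 : ρ ^ 2 < 1 := sq_lt_one_iff_abs_lt_one ρ |>.2 (abs_lt.2 hρ)
  have hUm : AEMeasurable U ℙ := .of_map_ne_zero (by rw [hU]; exact IsProbabilityMeasure.ne_zero _)
  have hVm : AEMeasurable V ℙ := .of_map_ne_zero (by rw [hV]; exact IsProbabilityMeasure.ne_zero _)
  have hpair : Measure.map (fun ω => (U ω, V ω)) ℙ
      = (gaussianReal 0 1).prod (gaussianReal 0 1) := by
    rw [(indepFun_iff_map_prod_eq_prod_map_map' hUm hVm (by rw [hU]; infer_instance)
      (by rw [hV]; infer_instance)).1 hUV, hU, hV]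
  have hlaw : Measure.map (fun ω => U ω * (ρ * U ω + √(1 - ρ ^ 2) * V ω)) ℙ
      = ((gaussianReal 0 1).prod (gaussianReal 0 1)).map
          (fun q : ℝ × ℝ => q.1 * (ρ * q.1 + √(1 - ρ ^ 2) * q.2)) := by
    rw [← hpair, AEMeasurable.map_map_of_aemeasurable (by fun_prop) (hUm.prodMk hVm)]
    rfl
  rw [hlaw, map_prod_gaussianReal_mul_correlated hρ2]
  -- only a.e.: at `z = 0` the mixture density is `∞`, while the divergent integral
  -- `besselK 0 0` takes the junk value `0`
  refine withDensity_congr_ae ?_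
  filter_upwards [(countable_singleton 0).ae_notMem volume] with z hz
  exact lintegral_gaussianPDF_correlated hρ2 hz

theorem product_normal_zero_mean_density {Ω : Type*} [MeasureSpace Ω]
    [IsProbabilityMeasure (ℙ : Measure Ω)]
    (U V : Ω → ℝ) (hUV : IndepFun U V ℙ)
    (hU : Measure.map U ℙ = gaussianReal 0 1) (hV : Measure.map V ℙ = gaussianReal 0 1)
    (ρ : ℝ) (hρ : ρ ∈ Set.Ioo (-1 : ℝ) 1) :
    Measure.map (fun ω => U ω * (ρ * U ω + Real.sqrt (1 - ρ ^ 2) * V ω)) ℙ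
      = volume.withDensity (fun x => ENNReal.ofReal
          ((1 / (π * Real.sqrt (1 - ρ ^ 2))) * Real.exp (ρ * x / (1 - ρ ^ 2))
            * besselK 0 (|x| / (1 - ρ ^ 2)))) :=
  product_normal_zero_mean_density_general U V hUV hU hV ρ hρ
end

section
/- Let X ~ N(μ_X, 1) and Y ~ N(0, 1) be independent. Then the product Z = XY has density f(x) = (1/π) e^{−μ_X²/2} ∑_{n=0}^∞ [μ_X^{2n} |x|^n / (2n)!] K_n(|x|) for x ≠ 0, where K_n is the modified Bessel function of the second kind of order n. -/
/-!
Conditionally on `Y = y ≠ 0`, the product `XY` is `N(μ_X y, y²)`, so `XY` has density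
`z ↦ ∫ φ(y) N(μ_X y, y²)(z) dy`. Folding `y ↦ -y` turns the factor `e^{μ_X z / y}` of the
integrand into `2 cosh (μ_X z / y)`. Expanding the cosh in its (nonnegative) power series and
exchanging sum and integral, the `n`-th term is a multiple of
`∫_0^∞ y^{-2n-1} e^{-z²/(2y²) - y²/2} dy`, which the substitution `y = √|z| e^{t/2}` turns into
`|z|^{-n} K_n(|z|)`.

All integrals are lower Lebesgue integrals, so no integrability estimate is needed: the density
integrates to `1`, hence is finite almost everywhere, and this finiteness is exactly what makes the
series summable and the Bessel integrals finite.
-/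

open MeasureTheory ProbabilityTheory Real Set
open scoped ENNReal NNReal

lemma lintegral_eq_lintegral_Ioi_add_neg {f : ℝ → ℝ≥0∞} (hf : Measurable f) :
    ∫⁻ x, f x = ∫⁻ x in Ioi 0, (f x + f (-x)) := by
  have hneg : ∫⁻ x in Iio 0, f x = ∫⁻ x in Ioi 0, f (-x) := by
    simpa using lintegral_image_eq_lintegral_abs_deriv_mul (measurableSet_Ioi (a := (0 : ℝ)))
      (fun x _ => (hasDerivAt_neg x).hasDerivWithinAt) neg_injective.injOn f
  rw [lintegral_add_right (g := fun x => f (-x)) f (hf.comp measurable_neg), ← hneg,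
    add_comm, ← lintegral_add_compl f measurableSet_Iio, compl_Iio,
    setLIntegral_congr Ioi_ae_eq_Ici.symm]

lemma MeasureTheory.Measure.mconv_eq_withDensity_lintegral {M : Type*} [Monoid M]
    [MeasurableSpace M] [MeasurableMul₂ M] {μ ν ρ : Measure M} [SFinite μ] [SFinite ν] [SFinite ρ]
    {p : M → M → ℝ≥0∞} (hp : Measurable (Function.uncurry p))
    (h : ∀ᵐ y ∂ν, μ.map (· * y) = ρ.withDensity (p y)) :
    μ ∗ₘ ν = ρ.withDensity fun z => ∫⁻ y, p y z ∂ν := by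
  ext s hs
  rw [Measure.mconv, Measure.map_apply measurable_mul hs,
    Measure.prod_apply_symm (measurable_mul hs), withDensity_apply _ hs]
  calc ∫⁻ y, μ ((fun x => (x, y)) ⁻¹' ((fun x : M × M => x.1 * x.2) ⁻¹' s)) ∂ν
      = ∫⁻ y, ∫⁻ z in s, p y z ∂ρ ∂ν := by
        refine lintegral_congr_ae (h.mono fun y hy => ?_)
        dsimp only
        rw [← withDensity_apply _ hs, ← hy, Measure.map_apply (measurable_mul_const y) hs]
        rfl
    _ = ∫⁻ z in s, ∫⁻ y, p y z ∂ν ∂ρ := lintegral_lintegral_swap hp.aemeasurable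

lemma measurable_uncurry_gaussianPDF_mul_const (m : ℝ) (v : ℝ≥0) :
    Measurable (Function.uncurry fun y z =>
      gaussianPDF (y * m) (.mk (y ^ 2) (sq_nonneg y) * v) z) := by
  simp only [Function.uncurry_def, gaussianPDF, gaussianPDFReal, NNReal.coe_mul, NNReal.coe_mk]
  fun_prop

lemma gaussianReal_mconv_eq_withDensity (m : ℝ) {v : ℝ≥0} (hv : v ≠ 0) {ν : Measure ℝ}
    [SFinite ν] (hν : ν {0} = 0) :
    gaussianReal m v ∗ₘ ν = volume.withDensity fun z =>
      ∫⁻ y, gaussianPDF (y * m) (.mk (y ^ 2) (sq_nonneg y) * v) z ∂ν := by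
  refine Measure.mconv_eq_withDensity_lintegral (measurable_uncurry_gaussianPDF_mul_const m v) ?_
  have hν' : ∀ᵐ y ∂ν, y ≠ 0 := by simpa [ae_iff] using hν
  filter_upwards [hν'] with y hy
  have hy2 : NNReal.mk (y ^ 2) (sq_nonneg y) ≠ 0 := by
    rw [← NNReal.coe_ne_zero, NNReal.coe_mk]
    positivity
  rw [gaussianReal_map_mul_const, gaussianReal_of_var_ne_zero _ (mul_ne_zero hy2 hv)]

lemma gaussianPDFReal_mul_gaussianPDFReal_mul_const (m z : ℝ) {y : ℝ} (hy : y ≠ 0) :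
    gaussianPDFReal 0 1 y * gaussianPDFReal (y * m) (.mk (y ^ 2) (sq_nonneg y) * 1) z
      = (2 * π * |y|)⁻¹ * rexp (-m ^ 2 / 2) * rexp (-(z ^ 2 / (2 * y ^ 2) + y ^ 2 / 2))
        * rexp (m * z / y) := by
  have hsqrt : √(2 * π * y ^ 2) = √(2 * π) * |y| := by
    rw [sqrt_mul (by positivity), sqrt_sq_eq_abs]
  have hconst : (√(2 * π))⁻¹ * (√(2 * π) * |y|)⁻¹ = (2 * π * |y|)⁻¹ := by
    rw [mul_inv, ← mul_assoc, ← mul_inv, mul_self_sqrt (by positivity), ← mul_inv]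
  have hexp : rexp (-(y - 0) ^ 2 / 2) * rexp (-(z - y * m) ^ 2 / (2 * y ^ 2))
      = rexp (-m ^ 2 / 2) * rexp (-(z ^ 2 / (2 * y ^ 2) + y ^ 2 / 2)) * rexp (m * z / y) := by
    simp only [← exp_add]
    congr 1
    field_simp
    ring
  simp only [gaussianPDFReal, NNReal.coe_mk, NNReal.coe_one, mul_one, hsqrt]
  calc _ = ((√(2 * π))⁻¹ * (√(2 * π) * |y|)⁻¹)
        * (rexp (-(y - 0) ^ 2 / 2) * rexp (-(z - y * m) ^ 2 / (2 * y ^ 2))) := by ring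
    _ = _ := by rw [hconst, hexp]; ring

lemma gaussianPDFReal_mul_gaussianPDFReal_mul_const_add_neg (m z : ℝ) {y : ℝ} (hy : 0 < y) :
    gaussianPDFReal 0 1 y * gaussianPDFReal (y * m) (.mk (y ^ 2) (sq_nonneg y) * 1) z
      + gaussianPDFReal 0 1 (-y)
        * gaussianPDFReal (-y * m) (.mk ((-y) ^ 2) (sq_nonneg (-y)) * 1) z
      = π⁻¹ * rexp (-m ^ 2 / 2)
        * (y⁻¹ * rexp (-(z ^ 2 / (2 * y ^ 2) + y ^ 2 / 2)) * cosh (m * z / y)) := by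
  rw [gaussianPDFReal_mul_gaussianPDFReal_mul_const m z hy.ne',
    gaussianPDFReal_mul_gaussianPDFReal_mul_const m z (neg_ne_zero.mpr hy.ne'), abs_neg,
    abs_of_pos hy, neg_sq, div_neg, cosh_eq]
  field_simp

lemma half_mul_inv_pow_mul_exp_eq_of_sq_eq (n : ℕ) {a y t : ℝ} (ha : 0 < a) (hy : 0 < y)
    (hsq : y ^ 2 = a * rexp t) :
    y / 2 * ((y ^ (2 * n + 1))⁻¹ * rexp (-(a ^ 2 / (2 * y ^ 2) + y ^ 2 / 2)))
      = (a ^ n)⁻¹ * (rexp (-(n * t) - a * cosh t) / 2) := by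
  have hpow : y ^ (2 * n + 1) = a ^ n * rexp (n * t) * y := by
    rw [pow_succ, pow_mul, hsq, mul_pow, ← exp_nat_mul]
  have hexp : a ^ 2 / (2 * y ^ 2) + y ^ 2 / 2 = a * cosh t := by
    rw [hsq, cosh_eq, exp_neg]
    field_simp
    ring
  rw [hpow, hexp, sub_eq_add_neg, exp_add, exp_neg (n * t)]
  field_simp

lemma lintegral_Ioi_inv_pow_mul_exp_eq (n : ℕ) {a : ℝ} (ha : 0 < a) :
    ∫⁻ y in Ioi 0,
        ENNReal.ofReal ((y ^ (2 * n + 1))⁻¹ * rexp (-(a ^ 2 / (2 * y ^ 2) + y ^ 2 / 2)))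
      = ENNReal.ofReal (a ^ n)⁻¹
        * ∫⁻ t in Ioi 0, ENNReal.ofReal (rexp (-a * cosh t) * cosh (n * t)) := by
  set f : ℝ → ℝ := fun t => √a * rexp (t / 2)
  have hsa : 0 < √a := sqrt_pos.mpr ha
  have hf_pos : ∀ t, 0 < f t := fun t => mul_pos hsa (exp_pos _)
  have hf' : ∀ t ∈ univ, HasDerivWithinAt f (f t / 2) univ t := fun t _ =>
    ((((hasDerivAt_id t).div_const 2).exp.const_mul √a).congr_deriv
      (by simp only [f, id]; ring)).hasDerivWithinAt
  have hmono : StrictMono f := fun s t hst =>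
    mul_lt_mul_of_pos_left (exp_lt_exp.mpr (by linarith)) hsa
  have himg : f '' univ = Ioi 0 := by
    refine Subset.antisymm (image_subset_iff.mpr fun t _ => hf_pos t) fun y hy => ?_
    refine ⟨2 * log (y / √a), trivial, ?_⟩
    show √a * rexp (2 * log (y / √a) / 2) = y
    rw [mul_div_cancel_left₀ _ two_ne_zero, exp_log (div_pos hy hsa)]
    field_simp
  have hsq : ∀ t, f t ^ 2 = a * rexp t := fun t => by
    rw [mul_pow, sq_sqrt ha.le, ← exp_nat_mul]
    ring_nf
  nth_rw 1 [← himg]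
  rw [lintegral_image_eq_lintegral_abs_deriv_mul MeasurableSet.univ hf'
      hmono.injective.injOn, Measure.restrict_univ]
  simp_rw [abs_of_pos (half_pos (hf_pos _)), ← ENNReal.ofReal_mul (half_pos (hf_pos _)).le,
    half_mul_inv_pow_mul_exp_eq_of_sq_eq n ha (hf_pos _) (hsq _)]
  rw [lintegral_eq_lintegral_Ioi_add_neg (by fun_prop),
    ← lintegral_const_mul' _ _ ENNReal.ofReal_ne_top]
  refine lintegral_congr fun t => ?_
  rw [← ENNReal.ofReal_add (by positivity) (by positivity), ← ENNReal.ofReal_mul (by positivity)]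
  congr 1
  rw [cosh_neg, cosh_eq (n * t), mul_neg, neg_neg, neg_mul, sub_eq_add_neg, sub_eq_add_neg,
    exp_add, exp_add]
  ring

lemma hasSum_inv_pow_mul_cosh (w E : ℝ) {y : ℝ} (hy : y ≠ 0) :
    HasSum (fun n : ℕ => w ^ (2 * n) / (Nat.factorial (2 * n) : ℝ) * ((y ^ (2 * n + 1))⁻¹ * E))
      (y⁻¹ * E * cosh (w / y)) := by
  have hterm : ∀ n : ℕ, y⁻¹ * E * ((w / y) ^ (2 * n) / (Nat.factorial (2 * n) : ℝ))
      = w ^ (2 * n) / (Nat.factorial (2 * n) : ℝ) * ((y ^ (2 * n + 1))⁻¹ * E) := fun n => by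
    rw [div_pow, pow_succ]
    field_simp
  simpa only [hterm] using (hasSum_cosh (w / y)).mul_left (y⁻¹ * E)

lemma ofReal_inv_mul_cosh_eq_tsum (w : ℝ) {E y : ℝ} (hE : 0 ≤ E) (hy : 0 < y) :
    ENNReal.ofReal (y⁻¹ * E * cosh (w / y))
      = ∑' n : ℕ, ENNReal.ofReal (w ^ (2 * n) / (Nat.factorial (2 * n) : ℝ))
          * ENNReal.ofReal ((y ^ (2 * n + 1))⁻¹ * E) := by
  have h := hasSum_inv_pow_mul_cosh w E hy.ne'
  have hnn : ∀ n : ℕ, 0 ≤ w ^ (2 * n) / (Nat.factorial (2 * n) : ℝ) := fun n => by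
    have := (even_two_mul n).pow_nonneg w
    positivity
  rw [← h.tsum_eq, ENNReal.ofReal_tsum_of_nonneg (fun n => by have := hnn n; positivity)
    h.summable]
  exact tsum_congr fun n => ENNReal.ofReal_mul (hnn n)

lemma gaussianPDF_mul_gaussianPDF_mul_const_add_neg_eq_tsum (m z : ℝ) {y : ℝ} (hy : 0 < y) :
    gaussianPDF 0 1 y * gaussianPDF (y * m) (.mk (y ^ 2) (sq_nonneg y) * 1) z
      + gaussianPDF 0 1 (-y) * gaussianPDF (-y * m) (.mk ((-y) ^ 2) (sq_nonneg (-y)) * 1) z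
      = ENNReal.ofReal (π⁻¹ * rexp (-m ^ 2 / 2))
        * ∑' n : ℕ, ENNReal.ofReal ((m * z) ^ (2 * n) / (Nat.factorial (2 * n) : ℝ))
          * ENNReal.ofReal ((y ^ (2 * n + 1))⁻¹ * rexp (-(|z| ^ 2 / (2 * y ^ 2) + y ^ 2 / 2))) := by
  have hnn : ∀ y' : ℝ, 0 ≤ gaussianPDFReal 0 1 y'
      * gaussianPDFReal (y' * m) (.mk (y' ^ 2) (sq_nonneg y') * 1) z := fun y' =>
    mul_nonneg (gaussianPDFReal_nonneg _ _ _) (gaussianPDFReal_nonneg _ _ _)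
  simp only [gaussianPDF]
  rw [← ENNReal.ofReal_mul (gaussianPDFReal_nonneg _ _ _),
    ← ENNReal.ofReal_mul (gaussianPDFReal_nonneg _ _ _), ← ENNReal.ofReal_add (hnn y) (hnn (-y)),
    gaussianPDFReal_mul_gaussianPDFReal_mul_const_add_neg m z hy,
    ENNReal.ofReal_mul (by positivity), sq_abs, ofReal_inv_mul_cosh_eq_tsum _ (exp_nonneg _) hy]

lemma lintegral_gaussianPDF_mul_const_eq_tsum (m : ℝ) {z : ℝ} (hz : z ≠ 0) :
    ∫⁻ y, gaussianPDF (y * m) (.mk (y ^ 2) (sq_nonneg y) * 1) z ∂gaussianReal 0 1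
      = ENNReal.ofReal (π⁻¹ * rexp (-m ^ 2 / 2))
        * ∑' n : ℕ, ENNReal.ofReal (m ^ (2 * n) * |z| ^ n / (Nat.factorial (2 * n) : ℝ))
          * ∫⁻ t in Ioi 0, ENNReal.ofReal (rexp (-|z| * cosh t) * cosh (n * t)) := by
  have hmeas : Measurable fun y => gaussianPDF (y * m) (.mk (y ^ 2) (sq_nonneg y) * 1) z :=
    (measurable_uncurry_gaussianPDF_mul_const m 1).of_uncurry_right
  rw [gaussianReal_of_var_ne_zero 0 one_ne_zero,
    lintegral_withDensity_eq_lintegral_mul _ (measurable_gaussianPDF 0 1) hmeas,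
    lintegral_eq_lintegral_Ioi_add_neg ((measurable_gaussianPDF 0 1).mul hmeas)]
  simp only [Pi.mul_apply]
  rw [setLIntegral_congr_fun measurableSet_Ioi fun y (hy : 0 < y) =>
      gaussianPDF_mul_gaussianPDF_mul_const_add_neg_eq_tsum m z hy,
    lintegral_const_mul' _ _ ENNReal.ofReal_ne_top, lintegral_tsum (by fun_prop)]
  congr 1
  refine tsum_congr fun n => ?_
  rw [lintegral_const_mul' _ _ ENNReal.ofReal_ne_top,
    lintegral_Ioi_inv_pow_mul_exp_eq n (abs_pos.mpr hz), ← mul_assoc,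
    ← ENNReal.ofReal_mul (by have := (even_two_mul n).pow_nonneg (m * z); positivity)]
  congr 2
  rw [mul_pow, ← (even_two_mul n).pow_abs z, pow_mul' |z| 2 n]
  field_simp

lemma besselK_eq_toReal_lintegral (ν x : ℝ) :
    besselK ν x = (∫⁻ t in Ioi 0, ENNReal.ofReal (rexp (-x * cosh t) * cosh (ν * t))).toReal :=
  integral_eq_lintegral_of_nonneg_ae (ae_of_all _ fun t => by positivity)
    (by fun_prop : Continuous fun t => rexp (-x * cosh t) * cosh (ν * t)).aestronglyMeasurable

lemma ENNReal.ofReal_mul_tsum_eq_ofReal {α : Type*} {c : ℝ} (hc : 0 ≤ c) {b : α → ℝ}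
    (hb : ∀ i, 0 ≤ b i) {K : α → ℝ≥0∞}
    (h : ENNReal.ofReal c * ∑' i, ENNReal.ofReal (b i) * K i ≠ ∞) :
    ENNReal.ofReal c * ∑' i, ENNReal.ofReal (b i) * K i
      = ENNReal.ofReal (c * ∑' i, b i * (K i).toReal) := by
  rw [← ENNReal.ofReal_toReal h, ENNReal.toReal_mul, ENNReal.toReal_ofReal hc]
  rcases hc.eq_or_lt with rfl | hc
  · simp
  have hsum : ∑' i, ENNReal.ofReal (b i) * K i ≠ ∞ := fun htop =>
    h (by rw [htop, ENNReal.mul_top (by simpa using hc)])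
  rw [ENNReal.tsum_toReal_eq fun i => ne_top_of_le_ne_top hsum (ENNReal.le_tsum i)]
  simp only [ENNReal.toReal_mul, ENNReal.toReal_ofReal (hb _)]

theorem product_normal_one_zero_mean_density {Ω : Type*} [MeasureSpace Ω]
    [IsProbabilityMeasure (ℙ : Measure Ω)]
    (X Y : Ω → ℝ) (hXY : IndepFun X Y ℙ) (μX : ℝ)
    (hX : Measure.map X ℙ = gaussianReal μX 1) (hY : Measure.map Y ℙ = gaussianReal 0 1) :
    Measure.map (fun ω => X ω * Y ω) ℙ
      = volume.withDensity (fun x => ENNReal.ofReal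
          ((1 / π) * Real.exp (-μX ^ 2 / 2)
            * ∑' n : ℕ, μX ^ (2 * n) * |x| ^ n / (Nat.factorial (2 * n) : ℝ)
                * besselK n |x|)) := by
  have hXm : AEMeasurable X ℙ := aemeasurable_of_map_neZero (by rw [hX]; infer_instance)
  have hYm : AEMeasurable Y ℙ := aemeasurable_of_map_neZero (by rw [hY]; infer_instance)
  set D : ℝ → ℝ≥0∞ := fun z =>
    ∫⁻ y, gaussianPDF (y * μX) (.mk (y ^ 2) (sq_nonneg y) * 1) z ∂gaussianReal 0 1
  have hconv : gaussianReal μX 1 ∗ₘ gaussianReal 0 1 = volume.withDensity D :=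
    gaussianReal_mconv_eq_withDensity μX one_ne_zero
      (gaussianReal_absolutelyContinuous 0 one_ne_zero volume_singleton)
  have hD_finite : ∀ᵐ z, D z < ∞ := by
    refine ae_lt_top (measurable_uncurry_gaussianPDF_mul_const μX 1).lintegral_prod_left' ?_
    rw [← setLIntegral_univ, ← withDensity_apply _ MeasurableSet.univ, ← hconv, measure_univ]
    exact ENNReal.one_ne_top
  rw [show (fun ω => X ω * Y ω) = X * Y from rfl, hXY.map_mul_eq_map_mconv_map₀ hXm hYm, hX, hY,
    hconv]
  refine withDensity_congr_ae ?_
  filter_upwards [hD_finite, compl_mem_ae_iff.mpr volume_singleton] with z hz (hz0 : z ≠ 0)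
  simp only [D, lintegral_gaussianPDF_mul_const_eq_tsum μX hz0] at hz ⊢
  rw [ENNReal.ofReal_mul_tsum_eq_ofReal (by positivity) (fun n => ?_) hz.ne, one_div]
  · simp only [besselK_eq_toReal_lintegral]
  · have := (even_two_mul n).pow_nonneg μX
    positivity
end
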